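/- Let n ≥ 2 and let H be an n×n real symmetric matrix with nonnegative entries, zero diagonal, that is irreducible (for all indices i ≠ j there exists a positive integer k with (H^k)_{ij} > 0), and with eigenvalues λ₁ ≤ ⋯ ≤ λₙ where λ₁ < λₙ. Suppose there is perfect state transfer from vertex 1 to vertex 2 at time t₀, i.e. |(exp(i t₀ H))₁₂| = 1, and suppose that for some h with 0 < |h| < π/(λₙ − λ₁) equality holds in the timing-error bound: |(exp(i(t₀+h)H))₁₂|² = (1/4)·|e^{i h λ₁} + e^{i h λₙ}|². Then n = 2 and there exists c > 0 such that H is c times the matrix [[0,1],[1,0]]. -/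

import Mathlib

open Matrix

/-- The time evolution `exp(i t H)` of a real symmetric Hamiltonian `H`,
regarded as a complex matrix. -/
noncomputable def timeEvo {n : ℕ} (H : Matrix (Fin n) (Fin n) ℝ) (t : ℝ) :
    Matrix (Fin n) (Fin n) ℂ :=
  NormedSpace.exp (Complex.I • (t : ℂ) • H.map (fun x => (x : ℂ)))

/-!
Write `u = Q eₐ`, `v = Q e_b` for the columns of `Q` in the eigenbasis of `H`, so that
`exp(itH)_{ab} = ∑ₖ uₖ vₖ e^{itμₖ}`. Perfect state transfer forces equality in
`1 ≤ ∑ |uₖ vₖ| ≤ ∑ (uₖ² + vₖ²)/2 = 1`, hence `|uₖ| = |vₖ|` and all terms share the phase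
`γ = exp(it₀H)_{ab}`, i.e. `vₖ = uₖ · γ e^{-it₀μₖ}`. Then `exp(i(t₀+h)H)_{ab} = γ ∑ₖ uₖ² e^{ihμₖ}`;
after factoring out the phase of the midpoint `(λ₁ + λₙ)/2`, the real part of this convex
combination of unit vectors is at least `cos(h(λₙ - λ₁)/2)`, strictly so unless `u` is supported
on the eigenvalues `λ₁` and `λₙ`. There `v = c(μ) u` with `c(λ₁) ≠ c(λₙ)` (as `u ⊥ v`), so
`span(u, v)` is invariant under `diag μ`: the coordinate plane of `a` and `b` is invariant under
`H`, which by irreducibility leaves no other vertex.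
-/

open Complex ComplexConjugate Finset

section Phases

variable {ι : Type*} [Fintype ι]

theorem norm_sum_mul_eq_norm_mul_sum_of_sum_norm_eq {T : ι → ℂ}
    (h : ∑ k, ‖T k‖ = ‖∑ k, T k‖) (k : ι) :
    ‖∑ l, T l‖ * T k = ‖T k‖ * ∑ l, T l := by
  set γ := ∑ l, T l
  have hle : ∀ l ∈ univ, (T l * conj γ).re ≤ ‖T l‖ * ‖γ‖ := fun l _ => by
    simpa using re_le_norm (T l * conj γ)
  have hsum : ∑ l, (T l * conj γ).re = ∑ l, ‖T l‖ * ‖γ‖ := by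
    rw [← re_sum, ← sum_mul, mul_conj, ← sum_mul, h, normSq_eq_norm_sq]
    norm_cast
    ring
  have hk : (T k * conj γ).re = ‖T k * conj γ‖ := by
    simpa using (sum_eq_sum_iff_of_le hle).1 hsum k (mem_univ k)
  have hreal : T k * conj γ = ‖T k‖ * ‖γ‖ := by
    rw [eq_re_of_ofReal_le (r := 0) (z := T k * conj γ)
      (by rw [ofReal_zero]; exact re_eq_norm.1 hk), hk]
    simp
  rcases eq_or_ne γ 0 with hγ | hγ
  · simp [hγ]
  apply mul_left_cancel₀ (ofReal_ne_zero.2 (norm_ne_zero_iff.2 hγ))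
  calc (‖γ‖ : ℂ) * (‖γ‖ * T k) = T k * (conj γ * γ) := by rw [conj_mul']; ring
    _ = (T k * conj γ) * γ := by ring
    _ = _ := by rw [hreal]; ring

theorem ofReal_mul_eq_mul_sum_of_norm_sum_eq_one {u v : ι → ℝ} {z : ι → ℂ}
    (hz : ∀ k, ‖z k‖ = 1) (hu : ∑ k, u k ^ 2 = 1) (hv : ∑ k, v k ^ 2 = 1)
    (h1 : ‖∑ k, u k * v k * z k‖ = 1) (k : ι) :
    v k * z k = u k * ∑ l, u l * v l * z l := by
  have hnorm : ∀ l, ‖(u l * v l * z l : ℂ)‖ = |u l| * |v l| := fun l => by simp [hz]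
  have hamgm : ∀ l ∈ univ, |u l| * |v l| ≤ (u l ^ 2 + v l ^ 2) / 2 := fun l _ => by
    nlinarith [two_mul_le_add_sq |u l| |v l|, sq_abs (u l), sq_abs (v l)]
  have hsum : ∑ l, (u l ^ 2 + v l ^ 2) / 2 = 1 := by
    rw [← sum_div, sum_add_distrib, hu, hv]; norm_num
  have htri : ‖∑ l, (u l * v l * z l : ℂ)‖ ≤ ∑ l, |u l| * |v l| :=
    (norm_sum_le _ _).trans_eq (sum_congr rfl fun l _ => hnorm l)
  have hle := sum_le_sum hamgm
  -- `1 = ‖∑ₗ uₗ vₗ zₗ‖ ≤ ∑ₗ |uₗ| |vₗ| ≤ ∑ₗ (uₗ² + vₗ²)/2 = 1`: both inequalities are equalities.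
  have habs : |u k| = |v k| := by
    have := (sum_eq_sum_iff_of_le hamgm).1 (by linarith) k (mem_univ k)
    nlinarith [sq_abs (u k), sq_abs (v k), abs_nonneg (u k), abs_nonneg (v k)]
  have hphase := norm_sum_mul_eq_norm_mul_sum_of_sum_norm_eq
    (T := fun l => (u l * v l * z l : ℂ)) (by simp only [hnorm]; linarith) k
  simp only [h1, hnorm, ofReal_one, one_mul] at hphase
  rcases eq_or_ne (u k) 0 with hu0 | hu0
  · simp [hu0, abs_eq_zero.1 (habs ▸ abs_eq_zero.2 hu0)]
  apply mul_left_cancel₀ (ofReal_ne_zero.2 hu0)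
  rw [← mul_assoc, ← mul_assoc, hphase, ← habs, abs_mul_abs_self]
  push_cast; ring

theorem abs_eq_of_norm_sum_mul_exp_eq_cos {w θ : ι → ℝ} {d : ℝ} (hw : ∀ k, 0 ≤ w k)
    (hw1 : ∑ k, w k = 1) (hθ : ∀ k, |θ k| ≤ d) (hd : d ≤ Real.pi)
    (h : ‖∑ k, (w k : ℂ) * exp (θ k * I)‖ = Real.cos d) {k : ι} (hk : w k ≠ 0) :
    |θ k| = d := by
  have hcos : ∀ l, Real.cos d ≤ Real.cos (θ l) := fun l => by
    rw [← Real.cos_abs (θ l)]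
    exact Real.cos_le_cos_of_nonneg_of_le_pi (abs_nonneg _) hd (hθ l)
  have hle : ∀ l ∈ univ, w l * Real.cos d ≤ w l * Real.cos (θ l) :=
    fun l _ => mul_le_mul_of_nonneg_left (hcos l) (hw l)
  have hre : ∑ l, w l * Real.cos (θ l) ≤ Real.cos d := by
    calc ∑ l, w l * Real.cos (θ l) = (∑ l, (w l : ℂ) * exp (θ l * I)).re := by
          simp [re_sum, exp_ofReal_mul_I_re]
      _ ≤ Real.cos d := h ▸ re_le_norm _
  have heq : ∑ l, w l * Real.cos d = ∑ l, w l * Real.cos (θ l) := by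
    refine le_antisymm (sum_le_sum hle) ?_
    rwa [← sum_mul, hw1, one_mul]
  have hk' := (sum_eq_sum_iff_of_le hle).1 heq k (mem_univ k)
  have hθd : Real.cos |θ k| = Real.cos d := by
    rw [Real.cos_abs]; exact (mul_left_cancel₀ hk hk').symm
  exact Real.injOn_cos ⟨abs_nonneg _, (hθ k).trans hd⟩
    ⟨(abs_nonneg _).trans (hθ k), hd⟩ hθd

theorem eq_or_eq_of_norm_sum_mul_exp_eq_cos {w μ : ι → ℝ} {ν₀ ν₁ h : ℝ} (hw : ∀ k, 0 ≤ w k)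
    (hw1 : ∑ k, w k = 1) (hμ : ∀ k, μ k ∈ Set.Icc ν₀ ν₁) (hh0 : h ≠ 0)
    (hh : |h| * (ν₁ - ν₀) ≤ 2 * Real.pi)
    (heq : ‖∑ k, (w k : ℂ) * exp (I * h * μ k)‖ = Real.cos (h * (ν₁ - ν₀) / 2))
    {k : ι} (hk : w k ≠ 0) : μ k = ν₀ ∨ μ k = ν₁ := by
  set m := (ν₀ + ν₁) / 2 with hm
  have hν : 0 ≤ ν₁ - ν₀ := by linarith [(hμ k).1, (hμ k).2]
  have hshift : ∑ l, (w l : ℂ) * exp (I * h * μ l)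
      = exp ((h * m : ℝ) * I) * ∑ l, (w l : ℂ) * exp ((h * (μ l - m) : ℝ) * I) := by
    rw [mul_sum]
    refine sum_congr rfl fun l _ => ?_
    rw [mul_left_comm, ← exp_add]
    push_cast; ring_nf
  have hcos : Real.cos (h * (ν₁ - ν₀) / 2) = Real.cos (|h| * (ν₁ - ν₀) / 2) := by
    rw [← Real.cos_abs, abs_div, abs_mul, abs_of_nonneg hν, abs_two]
  have hθ : ∀ l, |h * (μ l - m)| ≤ |h| * (ν₁ - ν₀) / 2 := fun l => by
    rw [abs_mul, mul_div_assoc]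
    gcongr
    exact abs_sub_le_iff.2 ⟨by linarith [(hμ l).2], by linarith [(hμ l).1]⟩
  rw [hshift, norm_mul, norm_exp_ofReal_mul_I, one_mul, hcos] at heq
  have hk' := abs_eq_of_norm_sum_mul_exp_eq_cos hw hw1 hθ (by linarith) heq hk
  rw [abs_mul, mul_div_assoc] at hk'
  rcases abs_eq (by linarith) |>.1 (mul_left_cancel₀ (abs_ne_zero.2 hh0) hk') with hμk | hμk
  · right; linarith
  · left; linarith

end Phases

theorem norm_exp_I_mul_add_exp_I_mul (x y : ℝ) :
    ‖exp (I * x) + exp (I * y)‖ = 2 * |Real.cos ((y - x) / 2)| := by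
  have hsplit : exp (I * x) + exp (I * y)
      = exp (((x + y) / 2 : ℝ) * I) * (2 * Real.cos ((y - x) / 2) : ℝ) := by
    push_cast
    rw [add_comm, Complex.cos, mul_div_cancel₀ _ two_ne_zero, mul_add, ← exp_add, ← exp_add]
    congr 2 <;> ring
  rw [hsplit, norm_mul, norm_exp_ofReal_mul_I, one_mul, norm_real, Real.norm_eq_abs, abs_mul,
    abs_two]

theorem exists_mul_eq_add_mul {ι : Type*} {μ u v : ι → ℝ} {c : ℝ → ℂ} {ν₀ ν₁ : ℝ}
    (hsupp : ∀ k, u k ≠ 0 → μ k = ν₀ ∨ μ k = ν₁) (hv : ∀ k, (v k : ℂ) = u k * c (μ k))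
    (hc : c ν₀ ≠ c ν₁) (ψ : ℝ → ℂ) : ∃ p q : ℂ, ∀ k, ψ (μ k) * u k = p * u k + q * v k := by
  have hc' : c ν₁ - c ν₀ ≠ 0 := sub_ne_zero.2 hc.symm
  -- on `{ν₀, ν₁}`, `ψ` is an affine function of `c`
  refine ⟨ψ ν₀ - (ψ ν₁ - ψ ν₀) / (c ν₁ - c ν₀) * c ν₀, (ψ ν₁ - ψ ν₀) / (c ν₁ - c ν₀),
    fun k => ?_⟩
  rcases eq_or_ne (u k) 0 with hu | hu
  · simp [hv, hu]
  rw [hv]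
  rcases hsupp k hu with h | h <;> rw [h] <;> field_simp <;> ring

/-- `A` maps the coordinate subspace spanned by `S` into itself. -/
def IsCoordInvariant {ι R : Type*} [Zero R] (A : Matrix ι ι R) (S : Set ι) : Prop :=
  ∀ i ∈ S, ∀ j ∉ S, A j i = 0

section Invariant

variable {ι R : Type*} [Fintype ι] [DecidableEq ι] [Semiring R] {A : Matrix ι ι R} {S : Set ι}

theorem IsCoordInvariant.pow (hS : IsCoordInvariant A S) (k : ℕ) :
    IsCoordInvariant (A ^ k) S := by
  intro i hi j hj
  induction k generalizing j with
  | zero => exact one_apply_ne fun h => hj (h ▸ hi)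
  | succ k ih =>
    rw [pow_succ', mul_apply]
    refine sum_eq_zero fun l _ => ?_
    by_cases hl : l ∈ S
    · rw [hS l hl j hj, zero_mul]
    · rw [ih l hl, mul_zero]

theorem IsCoordInvariant.eq_univ [Preorder R] (hS : IsCoordInvariant A S) {a : ι} (ha : a ∈ S)
    (hreach : ∀ j, j ≠ a → ∃ k : ℕ, 0 < (A ^ k) j a) : S = Set.univ := by
  refine Set.eq_univ_of_forall fun j => by_contra fun hj => ?_
  obtain ⟨k, hk⟩ := hreach j fun h => hj (h ▸ ha)
  exact hk.ne' (hS.pow k a ha j hj)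

end Invariant

theorem card_eq_two_and_eq_ite_of_isCoordInvariant_pair {ι : Type*} [Fintype ι] [DecidableEq ι]
    {H : Matrix ι ι ℝ} (hH : H.IsSymm) (hnonneg : ∀ i j, 0 ≤ H i j) (hdiag : ∀ i, H i i = 0)
    (hirr : ∀ i j, i ≠ j → ∃ k : ℕ, 0 < (H ^ k) i j) {a b : ι} (hab : a ≠ b)
    (hinv : IsCoordInvariant H {a, b}) :
    Nat.card ι = 2 ∧ ∃ c : ℝ, 0 < c ∧ ∀ i j, H i j = if i = j then 0 else c := by
  have hpair : ({a, b} : Set ι) = Set.univ :=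
    hinv.eq_univ (Set.mem_insert a _) fun j hj => hirr j a hj
  have hcover (j : ι) : j = a ∨ j = b := by
    simpa using Set.eq_univ_iff_forall.1 hpair j
  have hba : H b a = H a b := hH.apply a b
  have hpos : 0 < H a b := by
    refine (hnonneg a b).lt_of_ne' fun h0 => hab ?_
    have hinv_a : IsCoordInvariant H {a} := by
      rintro i rfl j hj
      rcases hcover j with rfl | rfl
      · exact absurd rfl hj
      · rw [hba, h0]
    have := hinv_a.eq_univ rfl fun j hj => hirr j a hj
    exact (Set.eq_univ_iff_forall.1 this b).symm
  refine ⟨Nat.card_eq_two_iff.2 ⟨a, b, hab, hpair⟩, H a b, hpos, fun i j => ?_⟩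
  rcases hcover i with rfl | rfl <;> rcases hcover j with rfl | rfl <;>
    simp [hdiag, hab, hab.symm, hba]

section Spectral

variable {ι : Type*} [Fintype ι] [DecidableEq ι] {H Q : Matrix ι ι ℝ} {μ : ι → ℝ}

theorem sum_mul_eq_one_apply (hQ : Qᵀ * Q = 1) (i j : ι) :
    ∑ k, Q k i * Q k j = (1 : Matrix ι ι ℝ) i j := by
  rw [← hQ, mul_apply]; rfl

theorem sum_sq_eq_one (hQ : Qᵀ * Q = 1) (i : ι) : ∑ k, Q k i ^ 2 = 1 := by
  simpa [sq] using sum_mul_eq_one_apply hQ i i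

theorem apply_eq_sum_mul (hHQ : H = Qᵀ * diagonal μ * Q) (i j : ι) :
    H i j = ∑ k, Q k i * μ k * Q k j := by
  simp [hHQ, mul_apply, diagonal_apply]

theorem isCoordInvariant_pair_of_ofReal_eq_mul (hQ : Qᵀ * Q = 1)
    (hHQ : H = Qᵀ * diagonal μ * Q) {a b : ι} (hab : a ≠ b) {c : ℝ → ℂ} {ν₀ ν₁ : ℝ}
    (hsupp : ∀ k, Q k a ≠ 0 → μ k = ν₀ ∨ μ k = ν₁) (hv : ∀ k, (Q k b : ℂ) = Q k a * c (μ k)) :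
    IsCoordInvariant H {a, b} := by
  have horth : ∀ i i', ∑ k, (Q k i : ℂ) * Q k i' = (1 : Matrix ι ι ℝ) i i' := fun i i' => by
    exact_mod_cast sum_mul_eq_one_apply hQ i i'
  have hc : c ν₀ ≠ c ν₁ := by
    -- otherwise `v = c ν₀ • u`, and `u ⊥ v` with `‖u‖ = 1` forces `v = 0`
    intro hc
    have hv₀ : ∀ k, (Q k b : ℂ) = Q k a * c ν₀ := fun k => by
      rcases eq_or_ne (Q k a) 0 with h | h
      · simp [hv, h]
      · rcases hsupp k h with h' | h' <;> simp [hv, h', hc]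
    have h0 : c ν₀ = 0 := by
      have hab' := horth a b
      simp_rw [hv₀, ← mul_assoc, ← sum_mul] at hab'
      simpa [horth a a, hab] using hab'
    simpa [hv₀, h0] using horth b b
  intro i hi j hj
  simp only [Set.mem_insert_iff, Set.mem_singleton_iff, not_or] at hi hj
  have hspan : ∀ p q : ℂ, ∑ k, (Q k j : ℂ) * (p * Q k a + q * Q k b) = 0 := fun p q => by
    simp only [mul_add, mul_left_comm _ p, mul_left_comm _ q, sum_add_distrib, ← mul_sum, horth]
    simp [hj.1, hj.2]
  obtain ⟨p, q, hpq⟩ := exists_mul_eq_add_mul hsupp hv hc (fun x => x)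
  obtain ⟨p', q', hpq'⟩ := exists_mul_eq_add_mul hsupp hv hc (fun x => x * c x)
  rcases hi with rfl | rfl
  · have : (H j i : ℂ) = ∑ k, (Q k j : ℂ) * (p * Q k i + q * Q k b) := by
      rw [apply_eq_sum_mul hHQ]
      push_cast
      exact sum_congr rfl fun k _ => by rw [← hpq, mul_assoc]
    exact_mod_cast this.trans (hspan p q)
  · have : (H j i : ℂ) = ∑ k, (Q k j : ℂ) * (p' * Q k a + q' * Q k i) := by
      rw [apply_eq_sum_mul hHQ]
      push_cast
      exact sum_congr rfl fun k _ => by rw [← hpq', hv]; ring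
    exact_mod_cast this.trans (hspan p' q')

end Spectral

section TimeEvolution

variable {n : ℕ} {H Q : Matrix (Fin n) (Fin n) ℝ} {μ : Fin n → ℝ}

theorem timeEvo_apply_eq_sum (hQ : Qᵀ * Q = 1) (hHQ : H = Qᵀ * diagonal μ * Q) (t : ℝ)
    (a b : Fin n) :
    timeEvo H t a b = ∑ k, (Q k a : ℂ) * Q k b * exp (I * t * μ k) := by
  set Qc := Q.map ofRealHom
  have hQc : Qcᵀ * Qc = 1 := by
    rw [← transpose_map, ← Matrix.map_mul, hQ, Matrix.map_one _ (map_zero _) (map_one _)]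
  let U : (Matrix (Fin n) (Fin n) ℂ)ˣ := ⟨Qcᵀ, Qc, hQc, mul_eq_one_comm.mp hQc⟩
  have hconj : I • (t : ℂ) • H.map (fun x => (x : ℂ)) = (U : Matrix (Fin n) (Fin n) ℂ) *
      diagonal (fun k => I * t * μ k) * (U⁻¹ : (Matrix (Fin n) (Fin n) ℂ)ˣ) := by
    ext i j
    simp [hHQ, U, Qc, mul_apply, diagonal_apply, Finset.mul_sum]
    exact Finset.sum_congr rfl fun k _ => by ring
  rw [timeEvo, hconj, Matrix.exp_units_conj, exp_diagonal, Pi.exp_def]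
  simp [U, Qc, mul_apply, diagonal_apply, exp_eq_exp_ℂ]
  exact Finset.sum_congr rfl fun k _ => by ring

theorem ofReal_mul_exp_eq_of_norm_timeEvo_eq_one (hQ : Qᵀ * Q = 1)
    (hHQ : H = Qᵀ * diagonal μ * Q) {t₀ : ℝ} {a b : Fin n} (hPST : ‖timeEvo H t₀ a b‖ = 1)
    (k : Fin n) : (Q k b : ℂ) * exp (I * t₀ * μ k) = Q k a * timeEvo H t₀ a b := by
  simp only [timeEvo_apply_eq_sum hQ hHQ] at hPST ⊢
  exact ofReal_mul_eq_mul_sum_of_norm_sum_eq_one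
    (fun k => by rw [mul_assoc, ← ofReal_mul, norm_exp_I_mul_ofReal])
    (sum_sq_eq_one hQ a) (sum_sq_eq_one hQ b) hPST k

theorem timeEvo_add_apply_of_norm_eq_one (hQ : Qᵀ * Q = 1) (hHQ : H = Qᵀ * diagonal μ * Q)
    {t₀ : ℝ} {a b : Fin n} (hPST : ‖timeEvo H t₀ a b‖ = 1) (h : ℝ) :
    timeEvo H (t₀ + h) a b = timeEvo H t₀ a b * ∑ k, (Q k a ^ 2 : ℝ) * exp (I * h * μ k) := by
  rw [timeEvo_apply_eq_sum hQ hHQ, mul_sum]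
  refine sum_congr rfl fun k _ => ?_
  rw [ofReal_add, mul_add, add_mul, exp_add, mul_assoc (Q k a : ℂ), ← mul_assoc (Q k b : ℂ),
    ofReal_mul_exp_eq_of_norm_timeEvo_eq_one hQ hHQ hPST]
  push_cast; ring

theorem norm_sum_sq_mul_exp_eq_cos_of_sq_norm_timeEvo_eq (hQ : Qᵀ * Q = 1)
    (hHQ : H = Qᵀ * diagonal μ * Q) {t₀ h ν₀ ν₁ : ℝ} {a b : Fin n}
    (hPST : ‖timeEvo H t₀ a b‖ = 1) (hh : |h * (ν₁ - ν₀)| ≤ Real.pi)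
    (heq : ‖timeEvo H (t₀ + h) a b‖ ^ 2
      = (1 / 4) * ‖exp (I * h * ν₀) + exp (I * h * ν₁)‖ ^ 2) :
    ‖∑ k, (Q k a ^ 2 : ℝ) * exp (I * h * μ k)‖ = Real.cos (h * (ν₁ - ν₀) / 2) := by
  have hcos : 0 ≤ Real.cos (h * (ν₁ - ν₀) / 2) := by
    refine Real.cos_nonneg_of_mem_Icc (abs_le.1 ?_)
    rw [abs_div, abs_two]
    linarith
  rw [timeEvo_add_apply_of_norm_eq_one hQ hHQ hPST, norm_mul, hPST, one_mul, mul_assoc I,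
    mul_assoc I, ← ofReal_mul, ← ofReal_mul, norm_exp_I_mul_add_exp_I_mul, ← mul_sub, mul_pow,
    sq_abs] at heq
  exact (pow_left_inj₀ (norm_nonneg _) hcos two_ne_zero).1 (by linarith)

end TimeEvolution

/-- Characterisation of equality in the timing-error bound for adjacency matrices: if
`H` is the adjacency matrix of a connected weighted graph (entrywise nonnegative,
symmetric, zero diagonal, irreducible) with perfect state transfer at `t₀`, and for
some `h` with `0 < |h| < π/(λₙ - λ₁)` the bound
`p(t₀+h) = ¼|e^{ihλ₁} + e^{ihλₙ}|²` is attained, then `n = 2` and `H` is a positive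
multiple of `[[0,1],[1,0]]`. -/
theorem stmt10 {n : ℕ} (hn : 2 ≤ n) (H : Matrix (Fin n) (Fin n) ℝ) (hH : H.IsSymm)
    (hnonneg : ∀ i j, 0 ≤ H i j) (hdiag : ∀ i, H i i = 0)
    (hirr : ∀ i j : Fin n, i ≠ j → ∃ k : ℕ, 0 < k ∧ 0 < (H ^ k) i j)
    (μ : Fin n → ℝ) (hmono : Monotone μ)
    (Q : Matrix (Fin n) (Fin n) ℝ) (hQ : Qᵀ * Q = 1)
    (hHQ : H = Qᵀ * Matrix.diagonal μ * Q)
    (hspread : μ ⟨0, by omega⟩ < μ ⟨n - 1, by omega⟩)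
    (t₀ : ℝ)
    (hPST : ‖timeEvo H t₀ ⟨0, by omega⟩ ⟨1, by omega⟩‖ = 1)
    (h : ℝ) (hh0 : 0 < |h|)
    (hh : |h| < Real.pi / (μ ⟨n - 1, by omega⟩ - μ ⟨0, by omega⟩))
    (heq : ‖timeEvo H (t₀ + h) ⟨0, by omega⟩ ⟨1, by omega⟩‖ ^ 2
      = (1 / 4) * ‖Complex.exp (Complex.I * (h : ℂ) * (μ ⟨0, by omega⟩ : ℂ)) +
          Complex.exp (Complex.I * (h : ℂ) * (μ ⟨n - 1, by omega⟩ : ℂ))‖ ^ 2) :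
    n = 2 ∧ ∃ c : ℝ, 0 < c ∧ ∀ i j : Fin n, H i j = if i = j then 0 else c := by
  set a : Fin n := ⟨0, by omega⟩
  set b : Fin n := ⟨1, by omega⟩
  set ν₀ := μ a
  set ν₁ := μ ⟨n - 1, by omega⟩
  set γ := timeEvo H t₀ a b
  have hh' : |h| * (ν₁ - ν₀) < Real.pi := (lt_div_iff₀ (sub_pos.2 hspread)).1 hh
  have hnorm := norm_sum_sq_mul_exp_eq_cos_of_sq_norm_timeEvo_eq hQ hHQ hPST
    (by rw [abs_mul, abs_of_pos (sub_pos.2 hspread)]; exact hh'.le) heq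
  have hμ (k : Fin n) : μ k ∈ Set.Icc ν₀ ν₁ :=
    ⟨hmono (Fin.le_iff_val_le_val.2 (Nat.zero_le _)),
      hmono (Fin.le_iff_val_le_val.2 (by simp; omega))⟩
  have hsupp (k : Fin n) (hk : Q k a ≠ 0) : μ k = ν₀ ∨ μ k = ν₁ :=
    eq_or_eq_of_norm_sum_mul_exp_eq_cos (fun k => sq_nonneg (Q k a)) (sum_sq_eq_one hQ a) hμ
      (abs_pos.1 hh0) (by linarith [Real.pi_pos]) hnorm (pow_ne_zero 2 hk)
  have hv (k : Fin n) : (Q k b : ℂ) = Q k a * (γ * exp (-(I * t₀ * μ k))) := by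
    rw [← mul_assoc, ← ofReal_mul_exp_eq_of_norm_timeEvo_eq_one hQ hHQ hPST, mul_assoc,
      ← exp_add, add_neg_cancel, exp_zero, mul_one]
  have hab : a ≠ b := by simp [a, b, Fin.ext_iff]
  obtain ⟨hcard, hc⟩ := card_eq_two_and_eq_ite_of_isCoordInvariant_pair hH hnonneg hdiag
    (fun i j hij => (hirr i j hij).imp fun _ => And.right) hab
    (isCoordInvariant_pair_of_ofReal_eq_mul hQ hHQ hab (c := fun x => γ * exp (-(I * t₀ * x)))
      hsupp hv)
  exact ⟨by simpa using hcard, hc⟩
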